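/- Let ℓ, m ≥ 1 and let v_1,…,v_m : Fin ℓ → ℝ be vectors all of whose entries lie in {0, 2}, each having at most one nonzero coordinate. Define the row points r_i ∈ ℝ^m by (r_i)_j = (v_j)_i, the unit points e_j ∈ ℝ^m with (e_j)_j = 1 and zeros elsewhere, and let X = {r_i : i ∈ Fin ℓ} ∪ {e_j : j ∈ Fin m}. Then the skyline of X has at most m elements. -/

import Mathlib

/-- `q` strictly dominates `p` if `q` is at least `p` in every coordinate and
strictly larger in at least one coordinate. -/
def StrictlyDominates {m : ℕ} (q p : Fin m → ℝ) : Prop :=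
  (∀ j, p j ≤ q j) ∧ ∃ j, p j < q j

/-- The skyline of a set of points: those points not strictly dominated by any
other point of the set. -/
def skyline {m : ℕ} (X : Set (Fin m → ℝ)) : Set (Fin m → ℝ) :=
  {p ∈ X | ∀ q ∈ X, ¬ StrictlyDominates q p}

/-!
A skyline point is nonzero, since the zero vector is dominated by a unit point, so it has a
nonzero coordinate `j`. At most one skyline point is nonzero in coordinate `j`: the points of
the block that are nonzero there are `e_j` and the rows `r_i` with `v_j i ≠ 0`, of which there
is at most one, and such a row dominates `e_j`. Hence choosing a nonzero coordinate is an
injection of the skyline into `Fin m`.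
-/

open Set

theorem Set.ncard_le_card_of_subsingleton_inter {α ι : Type*} [Fintype ι] {s : Set α}
    (t : ι → Set α) (hcover : ∀ x ∈ s, ∃ i, x ∈ t i) (hsub : ∀ i, (s ∩ t i).Subsingleton) :
    s.ncard ≤ Fintype.card ι := by
  choose f hf using hcover
  rw [← Nat.card_coe_set_eq, ← Nat.card_eq_fintype_card]
  refine Nat.card_le_card_of_injective (fun x : s => f x x.2) fun x y hxy => Subtype.ext ?_
  exact hsub (f y y.2) ⟨x.2, (show f x x.2 = f y y.2 from hxy) ▸ hf x x.2⟩ ⟨y.2, hf y y.2⟩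

section Skyline

variable {m : ℕ} {X : Set (Fin m → ℝ)} {p q : Fin m → ℝ}

theorem StrictlyDominates.notMem_skyline (hq : q ∈ X) (h : StrictlyDominates q p) :
    p ∉ skyline X :=
  fun hp => hp.2 q hq h

theorem ne_zero_of_mem_skyline (hq : q ∈ X) (h : StrictlyDominates q 0) (hp : p ∈ skyline X) :
    p ≠ 0 := by
  rintro rfl
  exact h.notMem_skyline hq hp

theorem strictlyDominates_single_zero (j : Fin m) {a : ℝ} (ha : 0 < a) :
    StrictlyDominates (Pi.single j a) 0 := by
  refine ⟨fun k => ?_, j, by simpa using ha⟩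
  by_cases hk : k = j
  · subst hk; simpa using ha.le
  · simp [hk]

theorem strictlyDominates_single_of_lt (j : Fin m) {a : ℝ} (hp : 0 ≤ p) (hj : a < p j) :
    StrictlyDominates p (Pi.single j a) := by
  refine ⟨fun k => ?_, j, by simpa using hj⟩
  by_cases hk : k = j
  · subst hk; simpa using hj.le
  · simpa [hk] using hp k

end Skyline

section Block

variable {ℓ m : ℕ}

def blockPoints (v : Fin m → Fin ℓ → ℝ) : Set (Fin m → ℝ) :=
  range (fun i j => v j i) ∪ range (fun j => Pi.single j 1)

theorem eq_row_or_eq_single_of_mem_blockPoints {v : Fin m → Fin ℓ → ℝ} {p : Fin m → ℝ}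
    (hp : p ∈ blockPoints v) {j : Fin m} (hj : p j ≠ 0) :
    (∃ i, p = (fun j => v j i) ∧ v j i ≠ 0) ∨ p = Pi.single j 1 := by
  rcases hp with ⟨i, rfl⟩ | ⟨k, rfl⟩
  · exact Or.inl ⟨i, rfl, hj⟩
  · obtain rfl : j = k := by by_contra hjk; simp [hjk] at hj
    exact Or.inr rfl

theorem subsingleton_skyline_blockPoints_inter {v : Fin m → Fin ℓ → ℝ}
    (hv : ∀ j i, v j i = 0 ∨ 1 < v j i) (hone : ∀ j i i', v j i ≠ 0 → v j i' ≠ 0 → i = i')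
    (j : Fin m) : (skyline (blockPoints v) ∩ {p | p j ≠ 0}).Subsingleton := by
  by_cases hrow : ∃ i, v j i ≠ 0
  · obtain ⟨i₀, hi₀⟩ := hrow
    refine subsingleton_of_forall_eq (fun j => v j i₀) fun p ⟨hp, hpj⟩ => ?_
    rcases eq_row_or_eq_single_of_mem_blockPoints hp.1 hpj with ⟨i, rfl, hi⟩ | rfl
    · rw [hone j i i₀ hi hi₀]
    · have hdom : StrictlyDominates (fun j => v j i₀) (Pi.single j 1) :=
        strictlyDominates_single_of_lt j
          (fun k => show 0 ≤ v k i₀ from (hv k i₀).elim ge_of_eq fun h => by linarith)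
          ((hv j i₀).resolve_left hi₀)
      exact absurd hp (hdom.notMem_skyline (Or.inl ⟨i₀, rfl⟩))
  · refine subsingleton_of_forall_eq (Pi.single j 1) fun p ⟨hp, hpj⟩ => ?_
    rcases eq_row_or_eq_single_of_mem_blockPoints hp.1 hpj with ⟨i, -, hi⟩ | rfl
    · exact (hrow ⟨i, hi⟩).elim
    · rfl

end Block

theorem block_skyline_card_le_general
    (ℓ m : ℕ) (hm : 1 ≤ m)
    (v : Fin m → Fin ℓ → ℝ)
    (hv : ∀ j i, v j i = 0 ∨ v j i = 2)
    (hone : ∀ j i i', v j i ≠ 0 → v j i' ≠ 0 → i = i')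
    (r : Fin ℓ → Fin m → ℝ) (hr : ∀ i j, r i j = v j i)
    (e : Fin m → Fin m → ℝ)
    (he : ∀ j j', e j j' = if j' = j then 1 else 0)
    (X : Set (Fin m → ℝ))
    (hX : X = {x | ∃ i, x = r i} ∪ {x | ∃ j, x = e j}) :
    (skyline X).ncard ≤ m := by
  obtain rfl : r = fun i j => v j i := funext₂ hr
  obtain rfl : e = fun j => Pi.single j 1 := funext₂ fun j j' => by rw [he, Pi.single_apply]
  obtain rfl : X = blockPoints v := by
    simp only [hX, blockPoints, range, eq_comm]
  have hv' : ∀ j i, v j i = 0 ∨ 1 < v j i := fun j i =>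
    (hv j i).imp_right fun h => by rw [h]; norm_num
  have hunit : StrictlyDominates (Pi.single ⟨0, hm⟩ 1) 0 := strictlyDominates_single_zero _ one_pos
  calc (skyline (blockPoints v)).ncard ≤ Fintype.card (Fin m) :=
        Set.ncard_le_card_of_subsingleton_inter (fun j => {p | p j ≠ 0})
          (fun p hp => Function.ne_iff.mp
            (ne_zero_of_mem_skyline (Or.inr ⟨_, rfl⟩) hunit hp))
          (subsingleton_skyline_blockPoints_inter hv' hone)
    _ = m := Fintype.card_fin m

/-- Regardless of collisions, a block of the lower-bound construction
contains at most `m` skyline points. -/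
theorem block_skyline_card_le
    (ℓ m : ℕ) (hℓ : 1 ≤ ℓ) (hm : 1 ≤ m)
    (v : Fin m → Fin ℓ → ℝ)
    (hv : ∀ j i, v j i = 0 ∨ v j i = 2)
    (hone : ∀ j i i', v j i ≠ 0 → v j i' ≠ 0 → i = i')
    (r : Fin ℓ → Fin m → ℝ) (hr : ∀ i j, r i j = v j i)
    (e : Fin m → Fin m → ℝ)
    (he : ∀ j j', e j j' = if j' = j then 1 else 0)
    (X : Set (Fin m → ℝ))
    (hX : X = {x | ∃ i, x = r i} ∪ {x | ∃ j, x = e j}) :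
    (skyline X).ncard ≤ m :=
  block_skyline_card_le_general ℓ m hm v hv hone r hr e he X hX
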